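/- The bivariate generating function A(t,y) = Σ_{ν≥1} Σ_{n≥0} A_n^ν t^n y^ν of constant-weight (d,k,r)-sequences beginning with a one equals yt(1-t^{r+1}) / (1 - t - y t^{d+1} + y t^{k+2}) as a formal power series identity. -/

import Mathlib

/-- Weight of a binary sequence: number of ones. -/
def wt (l : List Bool) : ℕ := l.count true

/-- Length of the leading run of zeros. -/
def leadZeros (l : List Bool) : ℕ := (l.takeWhile (fun b => !b)).length

/-- Length of the trailing run of zeros. -/
def trailZeros (l : List Bool) : ℕ := (l.reverse.takeWhile (fun b => !b)).length

/-- Every internal run of zeros (between two consecutive ones) has length in `[d, k]`. -/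
def internalOK (d k : ℕ) (l : List Bool) : Prop :=
  ∀ i j : ℕ, i < j → j < l.length → l.getD i false = true → l.getD j false = true →
    (∀ m, i < m → m < j → l.getD m false = false) →
    d ≤ j - i - 1 ∧ j - i - 1 ≤ k

/-- NRZI charge accumulator: current bipolar level `z`, remaining bits. -/
def chargeAux : ℤ → List Bool → ℤ
  | _, [] => 0
  | z, b :: t => (if b then -z else z) + chargeAux (if b then -z else z) t

/-- NRZI charge (digital sum) of a binary sequence. -/
def charge (l : List Bool) : ℤ := chargeAux 1 l

/-- Number of (d,k,r)-sequences of length n and weight ν beginning with a one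
(the empty sequence is allowed, giving `A 0 0 = 1`). -/
noncomputable def Adkr (d k r n ν : ℕ) : ℕ :=
  Nat.card {l : List Bool // l.length = n ∧ (l ≠ [] → l.head? = some true) ∧
    internalOK d k l ∧ trailZeros l ≤ r ∧ wt l = ν}

/-- Number of (d,k,l,r)-sequences of length n and weight ν. -/
noncomputable def Adklr (d k L r n ν : ℕ) : ℕ :=
  Nat.card {x : List Bool // x.length = n ∧ leadZeros x ≤ L ∧
    internalOK d k x ∧ trailZeros x ≤ r ∧ wt x = ν}

/-- Number of (d,k,r)-sequences of length n beginning with a one, with NRZI charge σ. -/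
noncomputable def Cdkr (d k r n : ℕ) (σ : ℤ) : ℕ :=
  Nat.card {l : List Bool // l.length = n ∧ (l ≠ [] → l.head? = some true) ∧
    internalOK d k l ∧ trailZeros l ≤ r ∧ charge l = σ}

/-- Number of (d,k,l,r)-sequences of length n with NRZI charge σ. -/
noncomputable def Cdklr (d k L r n : ℕ) (σ : ℤ) : ℕ :=
  Nat.card {x : List Bool // x.length = n ∧ leadZeros x ≤ L ∧
    internalOK d k x ∧ trailZeros x ≤ r ∧ charge x = σ}

/-- Binomial coefficient with integer upper argument; zero when the upper argument is negative. -/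
def ibin (a : ℤ) (b : ℕ) : ℤ := if 0 ≤ a then (a.toNat.choose b : ℤ) else 0

/-!
Cut a sequence after its first one and the zero-run that follows it. A sequence of weight
`ν + 2` is `1 0^a` followed by a sequence of weight `ν + 1` beginning with a one, where
`d ≤ a ≤ k`, and a sequence of weight one is `1 0^b` with `b ≤ r`. Hence
`A = y (t + ⋯ + t^(r+1)) + y (t^(d+1) + ⋯ + t^(k+1)) A`, and multiplying by `1 - t` sums both
geometric series.
-/

section Sequences

variable {d k : ℕ}

lemma internalOK_nil : internalOK d k [] := fun _ _ _ hj => absurd hj (Nat.not_lt_zero _)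

lemma internalOK_cons_iff {b : Bool} {l : List Bool} :
    internalOK d k (b :: l) ↔
      (b = true → ∀ j < l.length, l.getD j false = true →
        (∀ m < j, l.getD m false = false) → d ≤ j ∧ j ≤ k) ∧ internalOK d k l := by
  constructor
  · intro h
    refine ⟨fun hb j hj hjt hbefore => ?_, fun i j hij hj hit hjt hbetween => ?_⟩
    · have := h 0 (j + 1) j.succ_pos (by simpa using hj) (by simpa using hb) (by simpa using hjt)
        fun m hm hmj => by
          cases m with
          | zero => omega
          | succ m => simpa using hbefore m (by omega)
      simpa using this
    · have := h (i + 1) (j + 1) (by omega) (by simpa using hj) (by simpa using hit)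
        (by simpa using hjt) fun m hm hmj => by
          cases m with
          | zero => omega
          | succ m => simpa using hbetween m (by omega) (by omega)
      simpa using this
  · rintro ⟨hhead, hl⟩ i j hij hj hit hjt hbetween
    cases j with
    | zero => omega
    | succ j =>
      cases i with
      | zero =>
        have := hhead (by simpa using hit) j (by simpa using hj) (by simpa using hjt)
          fun m hm => by simpa using hbetween (m + 1) (by omega) (by omega)
        simpa using this
      | succ i =>
        have := hl i j (by omega) (by simpa using hj) (by simpa using hit) (by simpa using hjt)
          fun m hm hmj => by simpa using hbetween (m + 1) (by omega) (by omega)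
        omega

lemma internalOK_replicate_false_append {a : ℕ} {l : List Bool} :
    internalOK d k (List.replicate a false ++ l) ↔ internalOK d k l := by
  induction a with
  | zero => rfl
  | succ a ih => simp [List.replicate_succ, internalOK_cons_iff, ih]

lemma getD_replicate_false_append (a : ℕ) (l : List Bool) (j : ℕ) :
    (List.replicate a false ++ l).getD j false = if j < a then false else l.getD (j - a) false := by
  split_ifs with h
  · rw [List.getD_append _ _ _ _ (by simpa using h), List.getD_replicate _ h]
  · rw [List.getD_append_right _ _ _ _ (by simpa using h), List.length_replicate]

lemma internalOK_true_cons_replicate_false {m : ℕ} :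
    internalOK d k (true :: List.replicate m false) := by
  refine internalOK_cons_iff.mpr ⟨fun _ j _ hj _ => ?_, ?_⟩
  · simp only [List.getD_eq_getElem?_getD, List.getElem?_replicate] at hj
    split at hj <;> simp at hj
  · simpa using (internalOK_replicate_false_append (l := [])).mpr internalOK_nil

lemma internalOK_true_cons_replicate_false_append {a : ℕ} {l : List Bool}
    (hl : l.head? = some true) :
    internalOK d k (true :: (List.replicate a false ++ l)) ↔ (d ≤ a ∧ a ≤ k) ∧ internalOK d k l := by
  obtain ⟨t, rfl⟩ := List.head?_eq_some_iff.mp hl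
  have first_true (j : ℕ) : ((List.replicate a false ++ true :: t).getD j false = true ∧
      ∀ m < j, (List.replicate a false ++ true :: t).getD m false = false) ↔ j = a := by
    simp only [getD_replicate_false_append]
    constructor
    · rintro ⟨hj, hbefore⟩
      by_contra hne
      rcases Nat.lt_or_gt_of_ne hne with h | h
      · simp [h] at hj
      · simpa using hbefore a h
    · rintro rfl
      exact ⟨by simp, fun m hm => by simp [hm]⟩
  rw [internalOK_cons_iff, internalOK_replicate_false_append]
  refine and_congr_left' ⟨fun h => h rfl a (by simp) ((first_true a).mpr rfl).1
    ((first_true a).mpr rfl).2, fun h _ j _ hj hbefore => (first_true j).mp ⟨hj, hbefore⟩ ▸ h⟩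

lemma trailZeros_append_of_true_mem {l₁ l₂ : List Bool} (h : true ∈ l₂) :
    trailZeros (l₁ ++ l₂) = trailZeros l₂ := by
  have : (l₂.reverse.takeWhile (fun b => !b)).length ≠ l₂.reverse.length := fun hlen => by
    have := List.takeWhile_eq_self_iff.mp
      (List.IsPrefix.eq_of_length (List.takeWhile_prefix _) hlen) true (by simpa using h)
    simp at this
  rw [trailZeros, trailZeros, List.reverse_append, List.takeWhile_append, if_neg this]

lemma trailZeros_true_cons_replicate_false (m : ℕ) :
    trailZeros (true :: List.replicate m false) = m := by
  simp [trailZeros]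

lemma wt_true_cons_replicate_false_append (a : ℕ) (l : List Bool) :
    wt (true :: (List.replicate a false ++ l)) = wt l + 1 := by
  simp [wt, List.count_replicate]

lemma eq_true_cons_replicate_false_of_wt_eq_one {l : List Bool} (hl : l.head? = some true)
    (hw : wt l = 1) : l = true :: List.replicate (l.length - 1) false := by
  obtain ⟨t, rfl⟩ := List.head?_eq_some_iff.mp hl
  simpa [List.eq_replicate_iff] using List.count_eq_zero.mp (by simpa [wt] using hw)

lemma exists_eq_replicate_false_append_true_cons {t : List Bool} (h : true ∈ t) :
    ∃ a t', t = List.replicate a false ++ true :: t' := by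
  induction t with
  | nil => simp at h
  | cons b t ih =>
    cases b with
    | true => exact ⟨0, t, rfl⟩
    | false =>
      obtain ⟨a, t', rfl⟩ := ih (by simpa using h)
      exact ⟨a + 1, t', rfl⟩

lemma replicate_false_append_inj {a a' : ℕ} {l l' : List Bool} (hl : l.head? = some true)
    (hl' : l'.head? = some true)
    (h : List.replicate a false ++ l = List.replicate a' false ++ l') : a = a' ∧ l = l' := by
  obtain ⟨t, rfl⟩ := List.head?_eq_some_iff.mp hl
  obtain ⟨t', rfl⟩ := List.head?_eq_some_iff.mp hl'
  induction a generalizing a' with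
  | zero => cases a' <;> simp_all [List.replicate_succ]
  | succ a ih => cases a' <;> simp_all [List.replicate_succ]

end Sequences

def IsDkrSeq (d k r n ν : ℕ) (l : List Bool) : Prop :=
  l.length = n ∧ (l ≠ [] → l.head? = some true) ∧ internalOK d k l ∧ trailZeros l ≤ r ∧ wt l = ν

section Counting

variable {d k r : ℕ}

lemma Adkr_eq_card (n ν : ℕ) : Adkr d k r n ν = Nat.card {l // IsDkrSeq d k r n ν l} := rfl

instance (n ν : ℕ) : Finite {l // IsDkrSeq d k r n ν l} :=
  ((List.finite_length_eq Bool n).subset fun _ hl => hl.1).to_subtype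

lemma IsDkrSeq.head?_eq {n ν : ℕ} {l : List Bool} (h : IsDkrSeq d k r n (ν + 1) l) :
    l.head? = some true :=
  h.2.1 <| by rintro rfl; simpa [wt] using h.2.2.2.2

lemma isDkrSeq_succ_one_iff {m : ℕ} {l : List Bool} :
    IsDkrSeq d k r (m + 1) 1 l ↔ l = true :: List.replicate m false ∧ m ≤ r := by
  constructor
  · intro h
    have hl := eq_true_cons_replicate_false_of_wt_eq_one h.head?_eq h.2.2.2.2
    rw [h.1, Nat.add_sub_cancel] at hl
    refine ⟨hl, ?_⟩
    simpa [hl, trailZeros_true_cons_replicate_false] using h.2.2.2.1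
  · rintro ⟨rfl, hm⟩
    exact ⟨by simp, fun _ => rfl, internalOK_true_cons_replicate_false,
      by rwa [trailZeros_true_cons_replicate_false], by simp [wt, List.count_replicate]⟩

lemma isDkrSeq_add_two_iff {n ν : ℕ} {l : List Bool} :
    IsDkrSeq d k r n (ν + 2) l ↔ ∃ a ∈ Finset.Icc d k, ∃ l',
      IsDkrSeq d k r (n - (a + 1)) (ν + 1) l' ∧ l = true :: (List.replicate a false ++ l') := by
  constructor
  · intro h
    obtain ⟨t, rfl⟩ := List.head?_eq_some_iff.mp h.head?_eq
    obtain ⟨hlen, -, hok, htrail, hwt⟩ := h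
    have htrue : 0 < t.count true := by
      simp only [wt, List.count_cons_self] at hwt
      omega
    obtain ⟨a, t', rfl⟩ := exists_eq_replicate_false_append_true_cons (List.count_pos_iff.mp htrue)
    rw [internalOK_true_cons_replicate_false_append rfl] at hok
    rw [← List.cons_append, trailZeros_append_of_true_mem List.mem_cons_self] at htrail
    rw [wt_true_cons_replicate_false_append] at hwt
    refine ⟨a, Finset.mem_Icc.mpr hok.1, true :: t', ⟨?_, fun _ => rfl, hok.2, htrail, by omega⟩,
      rfl⟩
    simp only [List.length_cons, List.length_append, List.length_replicate] at hlen ⊢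
    omega
  · rintro ⟨a, ha, l', hl', rfl⟩
    obtain ⟨t, rfl⟩ := List.head?_eq_some_iff.mp hl'.head?_eq
    obtain ⟨hlen, -, hok, htrail, hwt⟩ := hl'
    refine ⟨?_, fun _ => rfl,
      (internalOK_true_cons_replicate_false_append rfl).mpr ⟨Finset.mem_Icc.mp ha, hok⟩, ?_,
      by rw [wt_true_cons_replicate_false_append, hwt]⟩
    · simp only [List.length_cons, List.length_append, List.length_replicate] at hlen ⊢
      omega
    · rwa [← List.cons_append, trailZeros_append_of_true_mem List.mem_cons_self]

lemma Adkr_zero_succ (ν : ℕ) : Adkr d k r 0 (ν + 1) = 0 := by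
  have : IsEmpty {l // IsDkrSeq d k r 0 (ν + 1) l} :=
    ⟨fun ⟨l, hl⟩ => by simpa [List.length_eq_zero_iff.mp hl.1] using hl.head?_eq⟩
  rw [Adkr_eq_card, Nat.card_of_isEmpty]

lemma Adkr_succ_one (m : ℕ) : Adkr d k r (m + 1) 1 = if m ≤ r then 1 else 0 := by
  rw [Adkr_eq_card, Nat.card_congr (Equiv.subtypeEquivRight fun _ => isDkrSeq_succ_one_iff)]
  split_ifs with hm <;> simp [hm]

lemma Adkr_add_two (n ν : ℕ) :
    Adkr d k r n (ν + 2) = ∑ a ∈ Finset.Icc d k, Adkr d k r (n - (a + 1)) (ν + 1) := by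
  let f : (Σ a : Finset.Icc d k, {l // IsDkrSeq d k r (n - (a + 1)) (ν + 1) l}) →
      {l // IsDkrSeq d k r n (ν + 2) l} :=
    fun x => ⟨true :: (List.replicate x.1 false ++ x.2),
      isDkrSeq_add_two_iff.mpr ⟨x.1, x.1.2, x.2, x.2.2, rfl⟩⟩
  have hf : f.Bijective := by
    refine ⟨fun ⟨⟨a, ha⟩, l, hl⟩ ⟨⟨a', ha'⟩, l', hl'⟩ h => ?_, fun ⟨l, hl⟩ => ?_⟩
    · obtain ⟨rfl, rfl⟩ := replicate_false_append_inj hl.head?_eq hl'.head?_eq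
        (List.cons_injective (congrArg Subtype.val h))
      rfl
    · obtain ⟨a, ha, l', hl', rfl⟩ := isDkrSeq_add_two_iff.mp hl
      exact ⟨⟨⟨a, ha⟩, l', hl'⟩, rfl⟩
  rw [Adkr_eq_card, ← Nat.card_eq_of_bijective f hf, Nat.card_sigma,
    ← Finset.sum_coe_sort (Finset.Icc d k)]
  rfl

end Counting

lemma one_sub_mul_sum_Icc_pow_succ {R : Type*} [CommRing R] (x : R) {m n : ℕ} (h : m ≤ n + 1) :
    (1 - x) * ∑ i ∈ Finset.Icc m n, x ^ (i + 1) = x ^ (m + 1) - x ^ (n + 2) := by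
  rw [← Finset.Ico_add_one_right_eq_Icc, Finset.sum_Ico_add' (fun i => x ^ i)]
  linear_combination -geom_sum_Ico_mul x (show m + 1 ≤ n + 1 + 1 by omega)

section GeneratingFunction

open MvPowerSeries

section Monomials

variable {R : Type*} [CommSemiring R]

lemma X_one_mul_X_zero_pow (m : ℕ) : (X 1 * X 0 ^ m : MvPowerSeries (Fin 2) R) =
    monomial (Finsupp.single 0 m + Finsupp.single 1 1) 1 := by
  rw [X_pow_eq, X, monomial_mul_monomial, one_mul, add_comm]

lemma coeff_X_one_mul_X_zero_pow_mul (m : ℕ) (φ : MvPowerSeries (Fin 2) R) (e : Fin 2 →₀ ℕ) :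
    coeff e (X 1 * X 0 ^ m * φ) = if m ≤ e 0 ∧ 1 ≤ e 1 then
      coeff (e - (Finsupp.single 0 m + Finsupp.single 1 1)) φ else 0 := by
  simp [X_one_mul_X_zero_pow, coeff_monomial_mul, Finsupp.le_def, Fin.forall_fin_two]

lemma coeff_X_one_mul_X_zero_pow (m : ℕ) (e : Fin 2 →₀ ℕ) :
    coeff e (X 1 * X 0 ^ m : MvPowerSeries (Fin 2) R) = if e 0 = m ∧ e 1 = 1 then 1 else 0 := by
  simp [X_one_mul_X_zero_pow, coeff_monomial, Finsupp.ext_iff, Fin.forall_fin_two]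

end Monomials

noncomputable def dkrGenFun (d k r : ℕ) : MvPowerSeries (Fin 2) ℤ :=
  fun e => if 1 ≤ e 1 then (Adkr d k r (e 0) (e 1) : ℤ) else 0

variable {d k r : ℕ}

lemma coeff_dkrGenFun (e : Fin 2 →₀ ℕ) :
    coeff e (dkrGenFun d k r) = if 1 ≤ e 1 then (Adkr d k r (e 0) (e 1) : ℤ) else 0 := rfl

lemma coeff_X_one_mul_X_zero_pow_mul_dkrGenFun (m : ℕ) (e : Fin 2 →₀ ℕ) :
    coeff e (X 1 * X 0 ^ m * dkrGenFun d k r) =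
      if m ≤ e 0 ∧ 2 ≤ e 1 then (Adkr d k r (e 0 - m) (e 1 - 1) : ℤ) else 0 := by
  rw [coeff_X_one_mul_X_zero_pow_mul, coeff_dkrGenFun]
  simp only [Finsupp.coe_tsub, Finsupp.coe_add, Pi.sub_apply, Pi.add_apply, Finsupp.single_apply]
  split_ifs <;> first | rfl | omega

theorem one_sub_mul_dkrGenFun :
    (1 - X 1 * ∑ a ∈ Finset.Icc d k, X 0 ^ (a + 1)) * dkrGenFun d k r =
      X 1 * ∑ b ∈ Finset.Icc 0 r, X 0 ^ (b + 1) := by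
  ext e
  simp only [sub_mul, one_mul, Finset.mul_sum, Finset.sum_mul, map_sub, map_sum,
    coeff_X_one_mul_X_zero_pow_mul_dkrGenFun, coeff_X_one_mul_X_zero_pow, coeff_dkrGenFun]
  generalize e 0 = n, e 1 = ν
  obtain _ | _ | ν := ν
  · simp
  · cases n with
    | zero => simp [Adkr_zero_succ]
    | succ n => simp [Adkr_succ_one]
  · have hterm (a : ℕ) : (if a + 1 ≤ n ∧ 2 ≤ ν + 2 then (Adkr d k r (n - (a + 1)) (ν + 2 - 1) : ℤ)
        else 0) = Adkr d k r (n - (a + 1)) (ν + 1) := by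
      split_ifs with h
      · rfl
      · rw [Nat.sub_eq_zero_of_le (by omega), Adkr_zero_succ, Nat.cast_zero]
    simp only [hterm, Adkr_add_two, Nat.cast_sum]
    simp

end GeneratingFunction

theorem stmt10 (d k r : ℕ) (hk : d ≤ k)
    (F : MvPowerSeries (Fin 2) ℤ)
    (hF : ∀ e : Fin 2 →₀ ℕ,
      F e = if 1 ≤ e 1 then (Adkr d k r (e 0) (e 1) : ℤ) else 0) :
    (1 - MvPowerSeries.X 0 - MvPowerSeries.X 1 * MvPowerSeries.X 0 ^ (d + 1) +
        MvPowerSeries.X 1 * MvPowerSeries.X 0 ^ (k + 2)) * F =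
      MvPowerSeries.X 1 * MvPowerSeries.X 0 * (1 - MvPowerSeries.X 0 ^ (r + 1)) := by
  obtain rfl : F = dkrGenFun d k r := funext hF
  have hP := one_sub_mul_sum_Icc_pow_succ (MvPowerSeries.X 0 : MvPowerSeries (Fin 2) ℤ)
    (Nat.le_succ_of_le hk)
  have hS := one_sub_mul_sum_Icc_pow_succ (MvPowerSeries.X 0 : MvPowerSeries (Fin 2) ℤ)
    (Nat.zero_le (r + 1))
  linear_combination (1 - MvPowerSeries.X 0) * one_sub_mul_dkrGenFun (d := d) (k := k) (r := r) +
    MvPowerSeries.X 1 * dkrGenFun d k r * hP + MvPowerSeries.X 1 * hS
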